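/- Given tokens e_t = [Φ₀ s_t, s_t, s_{t-1}] ∈ R^{3n} for t = 2,...,T, and a causally-masked linear self-attention head with value projection P W_v having block structure [[0, ηI, −ηΦ₀],[0,0,0],[0,0,0]] and key-query product W_k^⊤ W_q = [[0,0,0],[0,0,0],[0,I,0]], the attention update Δe_t = P W_v Σ_{t'=2}^{t} e_{t'} e_{t'}^⊤ W_k^⊤ W_q e_t equals [−η ∇L_t(Φ₀) s_t, 0, 0], where L_t(Φ) = Σ_{t'=2}^{t} (1/2)‖s_{t'} − Φ s_{t'-1}‖². Hence e_t + Δe_t = [(Φ₀ − η ∇L_t(Φ₀)) s_t, s_t, s_{t-1}]. -/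
import Mathlib


open Finset Matrix

/-- with the three-channel tokens `e_t = [Φ₀ s_t, s_t, s_{t-1}]`
(blocks indexed by `Fin 3`) and the stated block-structured projections,
the causally-masked linear self-attention update
`Δe_t = P W_v (Σ_{t'=2}^t e_{t'} e_{t'}ᵀ) W_kᵀ W_q e_t` equals
`[−η ∇L_t(Φ₀) s_t, 0, 0]`, and hence
`e_t + Δe_t = [(Φ₀ − η ∇L_t(Φ₀)) s_t, s_t, s_{t-1}]`, where
`∇L_t(Φ₀) = Σ_{t'=2}^t (Φ₀ s_{t'-1} − s_{t'}) s_{t'-1}ᵀ`. -/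
theorem stmt1 (n T : ℕ) (s : ℕ → Fin n → ℝ) (Φ₀ : Matrix (Fin n) (Fin n) ℝ) (η : ℝ)
    (e : ℕ → (Fin 3 × Fin n) → ℝ)
    (he : ∀ t (p : Fin 3 × Fin n), e t p =
      if p.1 = 0 then Φ₀.mulVec (s t) p.2
      else if p.1 = 1 then s t p.2 else s (t - 1) p.2)
    (PWv WkWq : Matrix (Fin 3 × Fin n) (Fin 3 × Fin n) ℝ)
    (hPWv : ∀ p q, PWv p q =
      if p.1 = 0 ∧ q.1 = 1 then (if p.2 = q.2 then η else 0)
      else if p.1 = 0 ∧ q.1 = 2 then -η * Φ₀ p.2 q.2 else 0)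
    (hWkWq : ∀ p q, WkWq p q = if p.1 = 2 ∧ q.1 = 1 ∧ p.2 = q.2 then 1 else 0)
    (gradL : ℕ → Matrix (Fin n) (Fin n) ℝ)
    (hgrad : ∀ t, gradL t = ∑ t' ∈ Finset.Icc 2 t,
      vecMulVec (Φ₀.mulVec (s (t' - 1)) - s t') (s (t' - 1)))
    (Δe : ℕ → (Fin 3 × Fin n) → ℝ)
    (hΔe : ∀ t, Δe t =
      (PWv * (∑ t' ∈ Finset.Icc 2 t, vecMulVec (e t') (e t')) * WkWq).mulVec (e t))
    (t : ℕ) (ht : 2 ≤ t) (htT : t ≤ T) :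
    (Δe t = fun p => if p.1 = 0 then (-η) * ((gradL t).mulVec (s t)) p.2 else 0) ∧
    ((e t + Δe t) = fun p =>
      if p.1 = 0 then ((Φ₀ - η • gradL t).mulVec (s t)) p.2
      else if p.1 = 1 then s t p.2 else s (t - 1) p.2) := by
  -- w = WkWq *ᵥ e t picks out s_t in channel 2
  have hw : WkWq *ᵥ e t = fun p => if p.1 = 2 then s t p.2 else 0 := by
    funext p
    obtain ⟨a, i⟩ := p
    simp only [Matrix.mulVec, dotProduct, hWkWq, Fintype.sum_prod_type, Fin.sum_univ_three]
    fin_cases a <;> simp [he]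
  -- sum of matrices acting on a vector
  have hsum : ∀ (A : ℕ → Matrix (Fin 3 × Fin n) (Fin 3 × Fin n) ℝ) (F : Finset ℕ)
      (v : (Fin 3 × Fin n) → ℝ), (∑ i ∈ F, A i) *ᵥ v = ∑ i ∈ F, (A i *ᵥ v) := by
    intro A F v
    funext p
    simp [Matrix.mulVec, dotProduct, Matrix.sum_apply, Finset.sum_mul]
    exact Finset.sum_comm
  -- rank-one matrix acting on a vector
  have hrank : ∀ (u v : (Fin 3 × Fin n) → ℝ), vecMulVec u u *ᵥ v = (u ⬝ᵥ v) • u := by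
    intro u v
    funext p
    simp only [Matrix.mulVec, dotProduct, vecMulVec_apply, Pi.smul_apply, smul_eq_mul,
      Finset.sum_mul]
    exact Finset.sum_congr rfl (fun q _ => by ring)
  -- PWv applied to a token
  have hPe : ∀ t', PWv *ᵥ e t' =
      fun p => if p.1 = 0 then η * (s t' p.2 - Φ₀.mulVec (s (t' - 1)) p.2) else 0 := by
    intro t'
    funext p
    obtain ⟨a, i⟩ := p
    simp only [Matrix.mulVec, dotProduct, hPWv, he, Fintype.sum_prod_type, Fin.sum_univ_three]
    fin_cases a <;>
      simp [Matrix.mulVec, dotProduct, mul_sub, sub_eq_add_neg, ← Finset.sum_neg_distrib]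
    rw [mul_add, Finset.mul_sum]
    congr 1
    exact Finset.sum_congr rfl (fun q _ => by ring)
  -- inner product of a token with w
  have hdot : ∀ t', e t' ⬝ᵥ (fun p => if p.1 = 2 then s t p.2 else 0) =
      s (t' - 1) ⬝ᵥ s t := by
    intro t'
    simp only [dotProduct, Fintype.sum_prod_type, Fin.sum_univ_three]
    simp [he]
  have h1 : Δe t = fun p => if p.1 = 0 then (-η) * ((gradL t).mulVec (s t)) p.2 else 0 := by
    rw [hΔe, ← Matrix.mulVec_mulVec, ← Matrix.mulVec_mulVec, hw, hsum]
    have : ∀ t' ∈ Finset.Icc 2 t,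
        (vecMulVec (e t') (e t')) *ᵥ (fun p => if p.1 = 2 then s t p.2 else 0)
          = (s (t' - 1) ⬝ᵥ s t) • e t' := by
      intro t' _
      rw [hrank, hdot]
    rw [Finset.sum_congr rfl this]
    have hlin : ∀ (F : Finset ℕ) (c : ℕ → ℝ) (v : ℕ → (Fin 3 × Fin n) → ℝ),
        PWv *ᵥ (∑ i ∈ F, c i • v i) = ∑ i ∈ F, c i • (PWv *ᵥ v i) := by
      intro F c v
      funext p
      simp [Matrix.mulVec, dotProduct, Finset.mul_sum, Finset.sum_apply, Finset.mul_sum,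
        Finset.sum_mul, mul_comm, mul_left_comm]
      exact Finset.sum_comm
    rw [hlin]
    funext p
    obtain ⟨a, i⟩ := p
    simp only [Finset.sum_apply, Pi.smul_apply, hPe, smul_eq_mul]
    by_cases ha : a = 0
    · simp only [ha, if_true]
      have hg : (gradL t *ᵥ s t) i =
          ∑ t' ∈ Finset.Icc 2 t, ((Φ₀ *ᵥ s (t' - 1)) i - s t' i) * (s (t' - 1) ⬝ᵥ s t) := by
        rw [hgrad]
        simp only [Matrix.mulVec, dotProduct, Matrix.sum_apply, vecMulVec_apply, Pi.sub_apply,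
          Finset.sum_mul, Finset.mul_sum]
        rw [Finset.sum_comm]
        exact Finset.sum_congr rfl fun t' _ => Finset.sum_congr rfl fun k _ => by ring
      rw [hg, Finset.mul_sum]
      exact Finset.sum_congr rfl fun t' _ => by ring
    · simp [ha]
  refine ⟨h1, ?_⟩
  funext p
  obtain ⟨a, i⟩ := p
  simp only [Pi.add_apply, h1, he, Matrix.sub_apply, Matrix.mulVec, dotProduct, Matrix.smul_apply,
    smul_eq_mul, sub_mul, Pi.sub_apply]
  by_cases ha : a = 0
  · simp only [ha, if_true, Matrix.mulVec, dotProduct, Matrix.sub_apply, Matrix.smul_apply,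
      smul_eq_mul, sub_mul, Finset.sum_sub_distrib, Finset.mul_sum]
    rw [sub_eq_add_neg, ← Finset.sum_neg_distrib]
    congr 1
    exact Finset.sum_congr rfl (fun q _ => by ring)
  · simp [ha]
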